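/- Let n be a multiplicative homogeneous polynomial law of degree d from B to A, and let θ := Θ_1 be its trace. Then θ(1) = d·1_A, the recursively defined maps Θ^θ_k coincide with the coefficient-defined maps Θ_k for all k ≥ 1, and Θ^θ_{d+1}(b_1, …, b_{d+1}) = 0 for all b_1, …, b_{d+1} ∈ B; in other words, θ is a degree d trace. -/

import Mathlib

open scoped TensorProduct

universe u

abbrev RawLaw (A B : Type u) [CommRing A] [CommRing B] [Algebra A B] : Type (u + 1) :=
  ∀ (A' : Type u) [CommRing A'] [Algebra A A'], A' ⊗[A] B → A'

variable {A B : Type u} [CommRing A] [CommRing B] [Algebra A B]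

/-- Naturality of a family of maps `A' ⊗[A] B → A'`. -/
def IsNatural (n : RawLaw A B) : Prop :=
  ∀ (A' : Type u) [CommRing A'] [Algebra A A']
    (A'' : Type u) [CommRing A''] [Algebra A A'']
    (φ : A' →ₐ[A] A'') (x : A' ⊗[A] B),
    φ (n A' x) = n A'' (LinearMap.rTensor B φ.toLinearMap x)

/-- Homogeneity of degree `d`. -/
def IsHomog (d : ℕ) (n : RawLaw A B) : Prop :=
  ∀ (A' : Type u) [CommRing A'] [Algebra A A'] (a : A') (x : A' ⊗[A] B),
    n A' (a • x) = a ^ d * n A' x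

/-- Multiplicativity. -/
def IsMult (n : RawLaw A B) : Prop :=
  ∀ (A' : Type u) [CommRing A'] [Algebra A A'],
    n A' (1 : A' ⊗[A] B) = 1 ∧ ∀ x y : A' ⊗[A] B, n A' (x * y) = n A' x * n A' y

/-- `Θ_k(b_1, …, b_k)`: the coefficient of `t_1 ⋯ t_k` in
`n_{A[t_1,…,t_k]}(1 ⊗ 1 + ∑ t_i ⊗ b_i)`. -/
noncomputable def Theta (n : RawLaw A B) (k : ℕ) (b : Fin k → B) : A :=
  MvPolynomial.coeff (Finsupp.equivFunOnFinite.symm fun _ => 1)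
    (n (MvPolynomial (Fin k) A)
      ((1 : MvPolynomial (Fin k) A ⊗[A] B) + ∑ i, MvPolynomial.X i ⊗ₜ[A] b i))

/-- The recursively defined maps `Θ^θ_{k+1}` attached to a map `θ : B → A`:
`ThetaRec θ k` is `Θ^θ_{k+1}`, with `Θ^θ_1 = θ` and
`Θ^θ_{k+2}(b_1,…,b_{k+2}) = θ(b_1)·Θ^θ_{k+1}(b_2,…,b_{k+2}) − ∑_{i=2}^{k+2} Θ^θ_{k+1}(b_2,…,b_1·b_i,…,b_{k+2})`. -/
def ThetaRec {A B : Type u} [CommRing A] [CommRing B] (θ : B → A) :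
    (k : ℕ) → (Fin (k + 1) → B) → A
  | 0, b => θ (b 0)
  | k + 1, b =>
      θ (b 0) * ThetaRec θ k (fun i => b i.succ)
        - ∑ i : Fin (k + 1), ThetaRec θ k (Function.update (fun j : Fin (k + 1) => b j.succ) i (b 0 * b i.succ))


/-! All the `Θ_k` are coefficients of *generic values* `n(1 + ∑ Xᵢ ⊗ cᵢ)`, and naturality of `n`
along substitutions sending each variable to a monomial expresses the coefficients of one generic
value through those of another. Substituting `X₀, X₁ ↦ a t, a' t` gives the linearity of `θ`;
`n((1 + t) • 1) = (1 + t)^d` gives `θ(1) = d`; and `Θ_{d+1} = 0` because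
`n(s ⊗ 1 + ∑ tᵢ ⊗ bᵢ)` is homogeneous of degree `d` while `t₁ ⋯ t_{d+1}` has degree `d + 1`.

The recursion is the coefficient of `t₀ t₁ ⋯ t_{k+1}` in
`n(1 + t₀ b₀) · n(1 + ∑ tᵢ bᵢ) = n(1 + ∑ⱼ tⱼ bⱼ + ∑ᵢ t₀ tᵢ (b₀ bᵢ))`. On the left it is
`θ(b₀) Θ_{k+1}(b₁, …)`, the two factors living in disjoint variables. On the right, the monomials
of the generic value of `(b, b₀ b₁, …, b₀ b_{k+1})` that contribute are `∏ⱼ Xⱼ`, giving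
`Θ_{k+2}(b)`, and for each `i` the product of `Yᵢ` with the `Xⱼ`, `j ∉ {0, i}`, giving
`Θ_{k+1}(b₁, …, b₀ bᵢ, …, b_{k+1})`. -/

open scoped TensorProduct
open MvPolynomial Function

theorem Finsupp.mapDomain_add_mapDomain_eq_iff {σ ρ τ M : Type*} [AddCommMonoid M] {f : σ → τ}
    {g : ρ → τ} (hf : Injective f) (hg : Injective g) (hfg : ∀ i j, f i ≠ g j)
    {u u' : σ →₀ M} {v v' : ρ →₀ M} :
    u.mapDomain f + v.mapDomain g = u'.mapDomain f + v'.mapDomain g ↔ u = u' ∧ v = v' := by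
  refine ⟨fun h => ?_, fun ⟨hu, hv⟩ => hu ▸ hv ▸ rfl⟩
  have hfr : ∀ (w : ρ →₀ M) i, w.mapDomain g (f i) = 0 := fun w i =>
    mapDomain_of_notMem_range _ _ fun ⟨j, hj⟩ => hfg i j hj.symm
  have hgr : ∀ (w : σ →₀ M) j, w.mapDomain f (g j) = 0 := fun w j =>
    mapDomain_of_notMem_range _ _ fun ⟨i, hi⟩ => hfg i j hi
  constructor <;> ext i
  · simpa [mapDomain_apply hf, hfr] using DFunLike.congr_fun h (f i)
  · simpa [mapDomain_apply hg, hgr] using DFunLike.congr_fun h (g i)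

noncomputable def allOnes (σ : Type*) [Fintype σ] : σ →₀ ℕ :=
  Finsupp.equivFunOnFinite.symm fun _ => 1

@[simp] theorem allOnes_apply {σ : Type*} [Fintype σ] (i : σ) : allOnes σ i = 1 := rfl

theorem allOnes_fin_one : allOnes (Fin 1) = Finsupp.single 0 1 := by
  refine Finsupp.ext fun i => ?_
  simp [Subsingleton.elim i 0]

theorem mapDomain_allOnes_apply {α β : Type*} [Fintype α] {f : α → β} (hf : Injective f)
    (s : β) [Decidable (s ∈ Set.range f)] :
    (allOnes α).mapDomain f s = if s ∈ Set.range f then 1 else 0 := by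
  split_ifs with h
  · obtain ⟨i, rfl⟩ := h
    rw [Finsupp.mapDomain_apply hf, allOnes_apply]
  · exact Finsupp.mapDomain_of_notMem_range _ _ h

theorem allOnes_eq_mapDomain_zero_add_mapDomain_succ (k : ℕ) :
    allOnes (Fin (k + 1)) = (allOnes (Fin 1)).mapDomain (fun _ => 0) +
      (allOnes (Fin k)).mapDomain Fin.succ := by
  classical
  refine Finsupp.ext fun j => ?_
  cases j using Fin.cases <;>
    simp [allOnes_fin_one, Finsupp.mapDomain_single, mapDomain_allOnes_apply, Fin.succ_injective]

namespace MvPolynomial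

variable {R σ τ : Type*} [CommSemiring R]

theorem aeval_monomial_monomial [Fintype σ] (m : σ → τ →₀ ℕ) (a : σ → R) (e : σ →₀ ℕ) (r : R) :
    aeval (fun j => monomial (m j) (a j)) (monomial e r) =
      monomial (∑ j, e j • m j) (r * ∏ j, a j ^ e j) := by
  simp_rw [aeval_monomial, Finsupp.prod_fintype _ _ (fun _ => pow_zero _), monomial_pow,
    ← monomial_sum_prod, algebraMap_eq, C_mul_monomial]

theorem coeff_aeval_monomial [Fintype σ] [DecidableEq τ] (m : σ → τ →₀ ℕ) (a : σ → R)
    (P : MvPolynomial σ R) (μ : τ →₀ ℕ) :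
    coeff μ (aeval (fun j => monomial (m j) (a j)) P) =
      ∑ e ∈ P.support with ∑ j, e j • m j = μ, coeff e P * ∏ j, a j ^ e j := by
  conv_lhs => rw [P.as_sum]
  simp only [map_sum, coeff_sum, aeval_monomial_monomial, coeff_monomial, Finset.sum_filter]

theorem coeff_aeval_monomial_eq_sum {ι : Type*} [Fintype σ] [Fintype ι] (m : σ → τ →₀ ℕ)
    (a : σ → R) (P : MvPolynomial σ R) (μ : τ →₀ ℕ) (ε : ι → σ →₀ ℕ) (hε : Injective ε)
    (hsol : ∀ e, ∑ j, e j • m j = μ ↔ ∃ i, ε i = e) :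
    coeff μ (aeval (fun j => monomial (m j) (a j)) P) =
      ∑ i, coeff (ε i) P * ∏ j, a j ^ ε i j := by
  classical
  rw [coeff_aeval_monomial, ← Finset.sum_image (f := fun e => coeff e P * ∏ j, a j ^ e j)
    fun i _ i' _ h => hε h]
  refine Finset.sum_subset (fun e he => ?_) (fun e he hne => ?_)
  · obtain ⟨i, rfl⟩ := (hsol e).1 (Finset.mem_filter.1 he).2
    exact Finset.mem_image_of_mem ε (Finset.mem_univ i)
  · obtain ⟨i, -, rfl⟩ := Finset.mem_image.1 he
    have hsupp : ε i ∉ P.support := fun h =>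
      hne (Finset.mem_filter.2 ⟨h, (hsol _).2 ⟨i, rfl⟩⟩)
    rw [notMem_support_iff.1 hsupp, zero_mul]

theorem coeff_rename_mul_rename {ρ : Type*} {f : σ → τ} {g : ρ → τ} (hf : Injective f)
    (hg : Injective g) (hfg : ∀ i j, f i ≠ g j) (P : MvPolynomial σ R) (Q : MvPolynomial ρ R)
    (u : σ →₀ ℕ) (v : ρ →₀ ℕ) :
    coeff (u.mapDomain f + v.mapDomain g) (rename f P * rename g Q) = coeff u P * coeff v Q := by
  classical
  induction P using MvPolynomial.induction_on' with
  | add P P' hP hP' => rw [map_add, add_mul, coeff_add, hP, hP', coeff_add, add_mul]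
  | monomial u' r =>
    induction Q using MvPolynomial.induction_on' with
    | add Q Q' hQ hQ' => rw [map_add, mul_add, coeff_add, hQ, hQ', coeff_add, mul_add]
    | monomial v' r' =>
      simp only [rename_monomial, monomial_mul, coeff_monomial,
        Finsupp.mapDomain_add_mapDomain_eq_iff hf hg hfg]
      split_ifs <;> simp_all

end MvPolynomial

section GenericValue

variable (n : RawLaw A B)

noncomputable def genericValue {σ : Type} [Fintype σ] (c : σ → B) : MvPolynomial σ A :=
  n (MvPolynomial σ A) (1 + ∑ i, X i ⊗ₜ[A] c i)

theorem theta_eq_coeff_genericValue (k : ℕ) (b : Fin k → B) :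
    Theta n k b = coeff (allOnes (Fin k)) (genericValue n b) := rfl

variable {n}

theorem IsNatural.map_apply_sum_tmul (hnat : IsNatural n) {R R' : Type u} [CommRing R]
    [Algebra A R] [CommRing R'] [Algebra A R'] (φ : R →ₐ[A] R') {σ : Type} [Fintype σ]
    (r : σ → R) (c : σ → B) :
    φ (n R (∑ i, r i ⊗ₜ[A] c i)) = n R' (∑ i, φ (r i) ⊗ₜ[A] c i) := by
  simp [hnat R R' φ, map_sum]

theorem IsNatural.map_genericValue (hnat : IsNatural n) {σ : Type} [Fintype σ] {R : Type u}
    [CommRing R] [Algebra A R] (φ : MvPolynomial σ A →ₐ[A] R) (c : σ → B) :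
    φ (genericValue n c) = n R (1 + ∑ i, φ (X i) ⊗ₜ[A] c i) := by
  simp [genericValue, hnat _ R φ, map_sum, Algebra.TensorProduct.one_def]

theorem IsNatural.coeff_mapDomain_genericValue (hnat : IsNatural n) {σ : Type} [Fintype σ]
    (c : σ → B) {m : ℕ} {f : Fin m → σ} (hf : Injective f) :
    coeff ((allOnes (Fin m)).mapDomain f) (genericValue n c) = Theta n m (c ∘ f) := by
  classical
  rw [← coeff_killCompl hf, hnat.map_genericValue, theta_eq_coeff_genericValue, genericValue]
  congr 3
  refine (Fintype.sum_of_injective f hf _ _ (fun j hj => ?_) (fun i => ?_)).symm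
  · rw [killCompl, aeval_X, dif_neg hj, TensorProduct.zero_tmul]
  · rw [← rename_X f, killCompl_rename_app, comp_apply]

theorem IsNatural.coeff_single_genericValue (hnat : IsNatural n) {σ : Type} [Fintype σ]
    (c : σ → B) (j : σ) :
    coeff (Finsupp.single j 1) (genericValue n c) = Theta n 1 (fun _ => c j) := by
  have := hnat.coeff_mapDomain_genericValue c (f := fun _ : Fin 1 => j)
    fun _ _ _ => Subsingleton.elim _ _
  rwa [allOnes_fin_one, Finsupp.mapDomain_single] at this

end GenericValue

section Trace

variable {n : RawLaw A B}

theorem IsNatural.theta_add_smul (hnat : IsNatural n) (a a' : A) (b b' : B) :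
    Theta n 1 (fun _ => a • b + a' • b') =
      a * Theta n 1 (fun _ => b) + a' * Theta n 1 (fun _ => b') := by
  have himage : aeval (fun j => monomial (Finsupp.single 0 1) (![a, a'] j))
      (genericValue n ![b, b']) = genericValue n (fun _ : Fin 1 => a • b + a' • b') := by
    have hmon : ∀ r : A, monomial (Finsupp.single (0 : Fin 1) 1) r = r • X 0 := fun r => by
      rw [X, smul_monomial, smul_eq_mul, mul_one]
    rw [hnat.map_genericValue, genericValue, Fin.sum_univ_two, Fin.sum_univ_one]
    simp [hmon, TensorProduct.smul_tmul, TensorProduct.tmul_add]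
  have hsol : ∀ e : Fin 2 →₀ ℕ, ∑ j, e j • Finsupp.single (0 : Fin 1) 1 = Finsupp.single 0 1 ↔
      ∃ i, Finsupp.single i 1 = e := by
    intro e
    simp only [Fin.sum_univ_two, Finsupp.smul_single, smul_eq_mul, mul_one, ← Finsupp.single_add,
      Finsupp.single_eq_single_iff, true_and, one_ne_zero, and_false, or_false]
    constructor
    · intro h
      rcases Nat.add_eq_one_iff.1 h with ⟨h0, h1⟩ | ⟨h0, h1⟩
      · exact ⟨1, Finsupp.ext fun j => by fin_cases j <;> simp [h0, h1]⟩
      · exact ⟨0, Finsupp.ext fun j => by fin_cases j <;> simp [h0, h1]⟩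
    · rintro ⟨i, rfl⟩
      fin_cases i <;> simp
  rw [theta_eq_coeff_genericValue, allOnes_fin_one, ← himage,
    coeff_aeval_monomial_eq_sum _ _ _ _ _ (Finsupp.single_left_injective one_ne_zero) hsol]
  simp [Fin.sum_univ_two, Fin.prod_univ_two, hnat.coeff_single_genericValue, mul_comm]

theorem theta_one_one (hhom : IsHomog d n) (hmult : IsMult n) : Theta n 1 (fun _ => 1) = d := by
  have hvalue : genericValue n (fun _ : Fin 1 => (1 : B)) = (1 + X 0) ^ d := by
    have hsmul : (1 : MvPolynomial (Fin 1) A ⊗[A] B) + X 0 ⊗ₜ[A] 1 =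
        (1 + X 0 : MvPolynomial (Fin 1) A) • (1 : MvPolynomial (Fin 1) A ⊗[A] B) := by
      rw [add_smul, one_smul, Algebra.TensorProduct.one_def, TensorProduct.smul_tmul', smul_eq_mul,
        mul_one]
    rw [genericValue, Fin.sum_univ_one, hsmul, hhom, (hmult _).1, mul_one]
  have hones : allOnes (Fin 1) = Finsupp.cons 1 0 := by
    refine Finsupp.ext fun i => ?_
    simp [Subsingleton.elim i 0]
  rw [theta_eq_coeff_genericValue, hvalue, hones, ← finSuccEquiv_coeff_coeff]
  simp only [map_pow, map_add, map_one, finSuccEquiv_X_zero, Polynomial.coeff_one_add_X_pow,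
    Nat.choose_one_right]
  rw [← map_natCast C, coeff_zero_C]

/-- The exponents of `X₀ ↦ s`, `X_{i+1} ↦ s tᵢ` (with `s = X none`, `tᵢ = X (some i)`): this
substitution turns `∑ Xⱼ ⊗ cⱼ` with `c = (1, b)` into `s • (1 + ∑ tᵢ ⊗ bᵢ)`. -/
noncomputable def homogenizingWeight (k : ℕ) : Fin (k + 1) → Option (Fin k) →₀ ℕ :=
  Fin.cons (Finsupp.single none 1) fun i => Finsupp.single none 1 + Finsupp.single (some i) 1

@[simp] theorem homogenizingWeight_none {k : ℕ} (j : Fin (k + 1)) :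
    homogenizingWeight k j none = 1 := by
  cases j using Fin.cases <;> simp [homogenizingWeight]

@[simp] theorem homogenizingWeight_some {k : ℕ} (j : Fin (k + 1)) (i : Fin k) :
    homogenizingWeight k j (some i) = if j = i.succ then 1 else 0 := by
  cases j using Fin.cases
  · simp [homogenizingWeight, (Fin.succ_ne_zero i).symm]
  · simp [homogenizingWeight, Finsupp.single_apply, eq_comm]

theorem IsNatural.aeval_homogenizingWeight (hnat : IsNatural n) (hhom : IsHomog d n) {k : ℕ}
    (b : Fin k → B) :
    aeval (fun j => monomial (homogenizingWeight k j) (1 : A))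
        (n (MvPolynomial (Fin (k + 1)) A) (∑ j, X j ⊗ₜ[A] (Fin.cons 1 b : Fin (k + 1) → B) j)) =
      X none ^ d * rename some (genericValue n b) := by
  have hX : ∀ i, monomial (homogenizingWeight k i.succ) (1 : A) = X none * X (some i) :=
    fun i => by rw [X, X, monomial_mul, one_mul]; rfl
  rw [hnat.map_apply_sum_tmul, hnat.map_genericValue, Fin.sum_univ_succ, ← hhom]
  congr 1
  simp only [aeval_X, rename_X, Fin.cons_zero, Fin.cons_succ, hX, smul_add, Finset.smul_sum,
    TensorProduct.smul_tmul', smul_eq_mul, Algebra.TensorProduct.one_def, mul_one]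
  rfl

theorem IsNatural.theta_succ_degree_eq_zero (hnat : IsNatural n) (hhom : IsHomog d n)
    (b : Fin (d + 1) → B) : Theta n (d + 1) b = 0 := by
  classical
  have hcoeff := congrArg (coeff (Finsupp.single none d + (allOnes _).mapDomain some))
    (hnat.aeval_homogenizingWeight hhom b)
  rw [X_pow_eq_monomial, coeff_monomial_mul, one_mul,
    coeff_rename_mapDomain _ (Option.some_injective _)] at hcoeff
  rw [theta_eq_coeff_genericValue, ← hcoeff, coeff_aeval_monomial]
  refine Finset.sum_eq_zero fun e he => absurd (Finset.mem_filter.1 he).2 fun hw => ?_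
  have hdeg : ∑ j, e j = d := by
    simpa [Finsupp.finsetSum_apply, Finsupp.mapDomain_of_notMem_range] using
      DFunLike.congr_fun hw none
  have hsucc : ∀ i : Fin (d + 1), e i.succ = 1 := fun i => by
    simpa [Finsupp.finsetSum_apply, Finsupp.mapDomain_apply (Option.some_injective _)]
      using DFunLike.congr_fun hw (some i)
  rw [Fin.sum_univ_succ, Finset.sum_congr rfl fun i _ => hsucc i] at hdeg
  simp at hdeg
  omega

end Trace
section KeyIdentity

variable (k : ℕ)

/-- The exponents of the substitution `Xⱼ ↦ tⱼ` (variable `Sum.inl j`) and `Yᵢ ↦ t₀ t_{i+1}`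
(variable `Sum.inr i`), which sends `1 + ∑ Xⱼ ⊗ bⱼ + ∑ Yᵢ ⊗ b₀ b_{i+1}` to
`(1 + t₀ ⊗ b₀) (1 + ∑ t_{i+1} ⊗ b_{i+1})`. -/
noncomputable def pairWeight : Fin (k + 2) ⊕ Fin (k + 1) → Fin (k + 2) →₀ ℕ :=
  Sum.elim (fun j => Finsupp.single j 1) fun i => Finsupp.single 0 1 + Finsupp.single i.succ 1

def pairEmbedding (i : Fin (k + 1)) : Fin (k + 1) → Fin (k + 2) ⊕ Fin (k + 1) :=
  update (Sum.inl ∘ Fin.succ) i (Sum.inr i)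

/-- The exponent vectors of weight `t₀ ⋯ t_{k+1}`: all the `Xⱼ`, or `Yᵢ` together with the `Xⱼ`
for `j ∉ {0, i + 1}`. -/
noncomputable def pairSolution : Option (Fin (k + 1)) → Fin (k + 2) ⊕ Fin (k + 1) →₀ ℕ
  | none => (allOnes _).mapDomain Sum.inl
  | some i => (allOnes _).mapDomain (pairEmbedding k i)

variable {k}

theorem pairEmbedding_apply (i j : Fin (k + 1)) :
    pairEmbedding k i j = if j = i then Sum.inr i else Sum.inl j.succ := by
  simp [pairEmbedding, update_apply]

theorem pairEmbedding_injective (i : Fin (k + 1)) : Injective (pairEmbedding k i) := by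
  intro j j' h
  simp only [pairEmbedding_apply] at h
  split_ifs at h <;> simp_all

@[simp] theorem pairSolution_none_inl (j : Fin (k + 2)) : pairSolution k none (Sum.inl j) = 1 := by
  rw [pairSolution, Finsupp.mapDomain_apply Sum.inl_injective, allOnes_apply]

@[simp] theorem pairSolution_none_inr (i : Fin (k + 1)) : pairSolution k none (Sum.inr i) = 0 :=
  Finsupp.mapDomain_of_notMem_range _ _ (by simp)

theorem pairSolution_some_inl_zero (i : Fin (k + 1)) : pairSolution k (some i) (Sum.inl 0) = 0 := by
  classical
  rw [pairSolution, mapDomain_allOnes_apply (pairEmbedding_injective i)]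
  simp [pairEmbedding_apply, ite_eq_iff, Fin.succ_ne_zero]

theorem pairSolution_some_inl_succ (i j : Fin (k + 1)) :
    pairSolution k (some i) (Sum.inl j.succ) = if j = i then 0 else 1 := by
  classical
  rw [pairSolution, mapDomain_allOnes_apply (pairEmbedding_injective i)]
  simp [pairEmbedding_apply, ite_eq_iff]

theorem pairSolution_some_inr (i i' : Fin (k + 1)) :
    pairSolution k (some i) (Sum.inr i') = if i' = i then 1 else 0 := by
  classical
  rw [pairSolution, mapDomain_allOnes_apply (pairEmbedding_injective i)]
  simp [pairEmbedding_apply, ite_eq_iff, eq_comm]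

theorem pairSolution_injective : Injective (pairSolution k) := by
  rintro (_ | i) (_ | i') h
  · rfl
  · simpa [pairSolution_some_inr] using DFunLike.congr_fun h (Sum.inr i')
  · simpa [pairSolution_some_inr] using DFunLike.congr_fun h (Sum.inr i)
  · simpa [pairSolution_some_inr, eq_comm] using DFunLike.congr_fun h (Sum.inr i)

theorem sum_smul_pairWeight_eq_allOnes_iff (e : Fin (k + 2) ⊕ Fin (k + 1) →₀ ℕ) :
    ∑ s, e s • pairWeight k s = allOnes _ ↔
      e (Sum.inl 0) + ∑ i, e (Sum.inr i) = 1 ∧ ∀ j, e (Sum.inl j.succ) + e (Sum.inr j) = 1 := by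
  rw [Finsupp.ext_iff, Fin.forall_fin_succ]
  simp [Fintype.sum_sum_type, pairWeight, Finsupp.single_apply,
    Fin.succ_ne_zero, (Fin.succ_ne_zero _).symm]

theorem exists_pairSolution_eq {e : Fin (k + 2) ⊕ Fin (k + 1) →₀ ℕ}
    (h0 : e (Sum.inl 0) + ∑ i, e (Sum.inr i) = 1)
    (hsucc : ∀ j, e (Sum.inl j.succ) + e (Sum.inr j) = 1) : ∃ o, pairSolution k o = e := by
  by_cases hr : ∀ i, e (Sum.inr i) = 0
  · refine ⟨none, Finsupp.ext ?_⟩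
    rintro (j | i)
    · cases j using Fin.cases <;> simp_all
    · simp [hr]
  obtain ⟨i, hi⟩ := not_forall.1 hr
  have hle : e (Sum.inr i) ≤ ∑ i, e (Sum.inr i) :=
    Finset.single_le_sum (f := fun i => e (Sum.inr i)) (fun _ _ => Nat.zero_le _)
      (Finset.mem_univ i)
  have hrest : ∀ i' ≠ i, e (Sum.inr i') = 0 := fun i' hne => by
    have : e (Sum.inr i) + e (Sum.inr i') ≤ ∑ i, e (Sum.inr i) := by
      rw [← Finset.sum_pair (f := fun x => e (Sum.inr x)) hne.symm]
      exact Finset.sum_le_sum_of_subset (Finset.subset_univ _)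
    omega
  refine ⟨some i, Finsupp.ext ?_⟩
  rintro (j | i')
  · cases j using Fin.cases with
    | zero => rw [pairSolution_some_inl_zero]; omega
    | succ j =>
      rw [pairSolution_some_inl_succ]
      have := hsucc j
      split_ifs with hj
      · subst hj; omega
      · have := hrest j hj; omega
  · rw [pairSolution_some_inr]
    split_ifs with hi'
    · subst hi'; omega
    · exact (hrest i' hi').symm

theorem sum_smul_pairWeight_eq_allOnes_iff_exists (e : Fin (k + 2) ⊕ Fin (k + 1) →₀ ℕ) :
    ∑ s, e s • pairWeight k s = allOnes _ ↔ ∃ o, pairSolution k o = e := by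
  rw [sum_smul_pairWeight_eq_allOnes_iff]
  refine ⟨fun ⟨h0, hsucc⟩ => exists_pairSolution_eq h0 hsucc, ?_⟩
  rintro ⟨_ | i, rfl⟩
  · simp
  · simp only [pairSolution_some_inl_zero, pairSolution_some_inl_succ, pairSolution_some_inr]
    exact ⟨by simp, fun j => by split_ifs <;> rfl⟩

end KeyIdentity

theorem IsNatural.aeval_pairWeight {n : RawLaw A B} (hnat : IsNatural n) {k : ℕ}
    (b : Fin (k + 2) → B) :
    aeval (fun s => monomial (pairWeight k s) (1 : A))
        (genericValue n (Sum.elim b fun i => b 0 * b i.succ)) =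
      n (MvPolynomial (Fin (k + 2)) A)
        ((1 + X 0 ⊗ₜ[A] b 0) * (1 + ∑ i : Fin (k + 1), X i.succ ⊗ₜ[A] b i.succ)) := by
  have hX : ∀ j : Fin (k + 2), monomial (Finsupp.single j 1) (1 : A) = X j := fun _ => rfl
  have hXX : ∀ j : Fin (k + 2),
      monomial (Finsupp.single 0 1 + Finsupp.single j 1) (1 : A) = X 0 * X j := fun j => by
    rw [← hX, ← hX, monomial_mul, one_mul]
  rw [hnat.map_genericValue]
  congr 1
  simp only [add_mul, mul_add, one_mul, mul_one, Finset.mul_sum,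
    Algebra.TensorProduct.tmul_mul_tmul, Fintype.sum_sum_type, aeval_X, pairWeight,
    Sum.elim_inl, Sum.elim_inr, hX, hXX, Finset.sum_add_distrib, Fin.sum_univ_succ (n := k + 1)]
  abel

theorem IsNatural.theta_mul_theta {n : RawLaw A B} (hnat : IsNatural n) (hmult : IsMult n)
    (k : ℕ) (b : Fin (k + 2) → B) :
    Theta n 1 (fun _ => b 0) * Theta n (k + 1) (fun j => b j.succ) =
      Theta n (k + 2) b +
        ∑ i : Fin (k + 1), Theta n (k + 1) (update (fun j => b j.succ) i (b 0 * b i.succ)) := by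
  classical
  set R := MvPolynomial (Fin (k + 2)) A
  have hx : n R (1 + X 0 ⊗ₜ[A] b 0) =
      rename (fun _ : Fin 1 => (0 : Fin (k + 2))) (genericValue n fun _ => b 0) := by
    rw [hnat.map_genericValue]
    simp
    rfl
  have hy : n R (1 + ∑ i : Fin (k + 1), X i.succ ⊗ₜ[A] b i.succ) =
      rename Fin.succ (genericValue n fun j => b j.succ) := by
    rw [hnat.map_genericValue]
    simp
    rfl
  calc Theta n 1 (fun _ => b 0) * Theta n (k + 1) (fun j => b j.succ)
      = coeff (allOnes _) (n R (1 + X 0 ⊗ₜ[A] b 0) *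
          n R (1 + ∑ i : Fin (k + 1), X i.succ ⊗ₜ[A] b i.succ)) := by
        rw [hx, hy, allOnes_eq_mapDomain_zero_add_mapDomain_succ,
          coeff_rename_mul_rename (fun _ _ _ => Subsingleton.elim _ _) (Fin.succ_injective _)
            fun _ j => (Fin.succ_ne_zero j).symm]
        rfl
    _ = ∑ o, coeff (pairSolution k o) (genericValue n (Sum.elim b fun i => b 0 * b i.succ)) := by
        rw [← (hmult R).2, ← hnat.aeval_pairWeight, coeff_aeval_monomial_eq_sum _ _ _ _ _
          pairSolution_injective sum_smul_pairWeight_eq_allOnes_iff_exists]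
        simp
    _ = _ := by
        rw [Fintype.sum_option]
        congr 1
        · exact hnat.coeff_mapDomain_genericValue _ Sum.inl_injective
        · refine Finset.sum_congr rfl fun i _ => ?_
          rw [pairSolution, hnat.coeff_mapDomain_genericValue _ (pairEmbedding_injective i),
            pairEmbedding, comp_update]
          rfl

theorem IsNatural.thetaRec_eq_theta {n : RawLaw A B} (hnat : IsNatural n) (hmult : IsMult n) :
    ∀ (k : ℕ) (b : Fin (k + 1) → B),
      ThetaRec (fun b' : B => Theta n 1 (fun _ => b')) k b = Theta n (k + 1) b
  | 0, b => congrArg (Theta n 1) (funext fun i => by rw [Subsingleton.elim i 0])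
  | k + 1, b => by
    rw [ThetaRec, hnat.thetaRec_eq_theta hmult k,
      Finset.sum_congr rfl fun i _ => hnat.thetaRec_eq_theta hmult k _,
      hnat.theta_mul_theta hmult k b]
    ring

theorem statement5_general {A B : Type u} [CommRing A] [CommRing B] [Algebra A B]
    (d : ℕ) (n : RawLaw A B)
    (hnat : IsNatural n) (hhom : IsHomog d n) (hmult : IsMult n) :
    IsLinearMap A (fun b : B => Theta n 1 (fun _ => b)) ∧
    Theta n 1 (fun _ => (1 : B)) = (d : A) ∧
    (∀ (k : ℕ) (b : Fin (k + 1) → B),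
      ThetaRec (fun b' : B => Theta n 1 (fun _ => b')) k b = Theta n (k + 1) b) ∧
    (∀ b : Fin (d + 1) → B, ThetaRec (fun b' : B => Theta n 1 (fun _ => b')) d b = 0) := by
  refine ⟨⟨fun b b' => ?_, fun a b => ?_⟩, theta_one_one hhom hmult,
    hnat.thetaRec_eq_theta hmult, fun b => ?_⟩
  · simpa using hnat.theta_add_smul 1 1 b b'
  · simpa using hnat.theta_add_smul a 0 b 0
  · rw [hnat.thetaRec_eq_theta hmult, hnat.theta_succ_degree_eq_zero hhom]

/-- Let `n` be a multiplicative homogeneous polynomial law of degree `d`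
and let `θ := Θ_1` be its trace. Then `θ` is `A`-linear, `θ(1) = d·1_A`, the recursively
defined maps `Θ^θ_k` coincide with the coefficient-defined maps `Θ_k` for all `k ≥ 1`,
and `Θ^θ_{d+1} ≡ 0`; in other words, `θ` is a degree `d` trace. -/
theorem statement5 {A B : Type u} [CommRing A] [CommRing B] [Algebra A B]
    (d : ℕ) (hd : 0 < d) (n : RawLaw A B)
    (hnat : IsNatural n) (hhom : IsHomog d n) (hmult : IsMult n) :
    IsLinearMap A (fun b : B => Theta n 1 (fun _ => b)) ∧
    Theta n 1 (fun _ => (1 : B)) = (d : A) ∧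
    (∀ (k : ℕ) (b : Fin (k + 1) → B),
      ThetaRec (fun b' : B => Theta n 1 (fun _ => b')) k b = Theta n (k + 1) b) ∧
    (∀ b : Fin (d + 1) → B, ThetaRec (fun b' : B => Theta n 1 (fun _ => b')) d b = 0) :=
  statement5_general d n hnat hhom hmult
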